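/- arXiv:1807.04136 — 2 statements merged into one kernel-verified Lean document; each statement's English description precedes it below -/
import Mathlib

section
/- For genus g = 2, the Verlinde formula specializes to a binomial coefficient: for every positive integer k, ((k+2)/2) · Σ_{j=1}^{k+1} (sin²(jπ/(k+2)))^{-1} = C(k+3, 3), i.e., the Verlinde number equals (k+1)(k+2)(k+3)/6. -/
/-!
With `z = exp (2θi)` one has `-4 sin²θ · z = (z - 1)²`, and for a nontrivial `n`-th root of
unity `z` the sum `∑_{m<n} (m² - nm) zᵐ` telescopes to `-2nz / (z - 1)²`. Hence
`sin (jπ/n)⁻² = (2/n) ∑_{m<n} (m² - nm) ζ^{jm}` with `ζ = exp (2πi/n)`; summing over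
`0 < j < n`, orthogonality of the characters `j ↦ ζ^{jm}` turns this into
`(2/n) ∑_{m<n} (nm - m²) = (n² - 1)/3`, and `(k+2)/2 · ((k+2)² - 1)/3 = C(k+3, 3)`.
-/

open Complex Finset
open scoped Real

theorem sub_one_pow_three_mul_sum_range_quadratic_mul_pow {R : Type*} [CommRing R]
    (c z : R) (N : ℕ) :
    (z - 1) ^ 3 * ∑ m ∈ range N, ((m : R) ^ 2 - c * m) * z ^ m
      = (z - 1) * ((1 - c) * z + (c * N - (N : R) ^ 2 + 2) * z ^ N
          + (((N : R) - 1) ^ 2 - c * ((N : R) - 1)) * z ^ (N + 1))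
        + 2 * (z ^ N - z ^ 2) := by
  induction N with
  | zero => simp only [range_zero, sum_empty, Nat.cast_zero]; ring
  | succ N ih =>
    rw [sum_range_succ, mul_add, ih]
    push_cast
    ring

theorem sub_one_sq_mul_sum_range_quadratic_mul_pow_of_pow_eq_one {R : Type*} [CommRing R]
    [IsDomain R] {z : R} {n : ℕ} (hz : z ≠ 1) (hzn : z ^ n = 1) :
    (z - 1) ^ 2 * ∑ m ∈ range n, ((m : R) ^ 2 - n * m) * z ^ m = -2 * n * z := by
  have h := sub_one_pow_three_mul_sum_range_quadratic_mul_pow (n : R) z n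
  rw [pow_succ z n, hzn, one_mul] at h
  apply mul_left_cancel₀ (sub_ne_zero.mpr hz)
  linear_combination h

theorem Complex.neg_four_mul_sin_sq_mul_exp (θ : ℂ) :
    -4 * sin θ ^ 2 * exp (2 * θ * I) = (exp (2 * θ * I) - 1) ^ 2 := by
  have hsq : exp (2 * θ * I) = exp (θ * I) ^ 2 := by rw [← exp_nat_mul]; ring_nf
  have hinv : exp (-θ * I) = (exp (θ * I))⁻¹ := by rw [← exp_neg]; ring_nf
  have hne : exp (θ * I) ≠ 0 := exp_ne_zero _
  rw [sin, hsq, hinv]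
  field_simp
  linear_combination -4 * (1 - exp (θ * I) ^ 2) ^ 2 * I_sq

theorem Complex.inv_sin_sq_eq_sum_range {θ : ℂ} {n : ℕ} (hn : n ≠ 0)
    (hne : exp (2 * θ * I) ≠ 1) (hpow : exp (2 * θ * I) ^ n = 1) :
    (sin θ ^ 2)⁻¹ = 2 / n * ∑ m ∈ range n, ((m : ℂ) ^ 2 - n * m) * exp (2 * θ * I) ^ m := by
  have hsum := sub_one_sq_mul_sum_range_quadratic_mul_pow_of_pow_eq_one hne hpow
  rw [← neg_four_mul_sin_sq_mul_exp] at hsum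
  set S := ∑ m ∈ range n, ((m : ℂ) ^ 2 - n * m) * exp (2 * θ * I) ^ m
  have h2z : (-2 : ℂ) * exp (2 * θ * I) ≠ 0 := mul_ne_zero (by norm_num) (exp_ne_zero _)
  have hsS : 2 * (sin θ ^ 2 * S) = n := by
    apply mul_left_cancel₀ h2z
    linear_combination hsum
  apply inv_eq_of_mul_eq_one_right
  calc sin θ ^ 2 * (2 / n * S) = 2 * (sin θ ^ 2 * S) / n := by ring
    _ = 1 := by rw [hsS, div_self (Nat.cast_ne_zero.mpr hn)]

theorem IsPrimitiveRoot.sum_Ico_pow_pow_eq_neg_one {R : Type*} [Field R] {ζ : R} {n m : ℕ}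
    (hζ : IsPrimitiveRoot ζ n) (hm : m ≠ 0) (hmn : m < n) :
    ∑ j ∈ Ico 1 n, (ζ ^ j) ^ m = -1 := by
  have hne : ζ ^ m ≠ 1 := hζ.pow_ne_one_of_pos_of_lt hm hmn
  have hpow : (ζ ^ m) ^ n = 1 := by rw [← pow_mul, mul_comm, pow_mul, hζ.pow_eq_one, one_pow]
  have hgeom : ∑ j ∈ range n, (ζ ^ m) ^ j = 0 := by
    rw [geom_sum_eq hne, hpow, sub_self, zero_div]
  rw [sum_range_eq_add_Ico _ (by omega), pow_zero] at hgeom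
  simp_rw [← pow_mul, mul_comm _ m, pow_mul]
  linear_combination hgeom

theorem sum_range_mul_sub_sq {R : Type*} [CommRing R] (c : R) (N : ℕ) :
    6 * ∑ m ∈ range N, (c * m - (m : R) ^ 2)
      = 3 * c * N * (N - 1) - (N - 1) * N * (2 * N - 1) := by
  induction N with
  | zero => simp
  | succ N ih =>
    rw [sum_range_succ, mul_add, ih]
    push_cast
    ring

theorem Real.sum_Ico_inv_sin_sq {n : ℕ} (hn : n ≠ 0) :
    ∑ j ∈ Ico 1 n, (Real.sin (j * π / n) ^ 2)⁻¹ = ((n : ℝ) ^ 2 - 1) / 3 := by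
  set ζ : ℂ := Complex.exp (2 * π * I / n)
  have hζ : IsPrimitiveRoot ζ n := isPrimitiveRoot_exp n hn
  have hn' : (n : ℂ) ≠ 0 := Nat.cast_ne_zero.mpr hn
  have hterm : ∀ j ∈ Ico 1 n, (Complex.sin (j * π / n) ^ 2)⁻¹
      = 2 / n * ∑ m ∈ range n, ((m : ℂ) ^ 2 - n * m) * (ζ ^ j) ^ m := by
    intro j hj
    obtain ⟨hj0, hjn⟩ := mem_Ico.mp hj
    have hexp : Complex.exp (2 * (j * π / n) * I) = ζ ^ j := by
      rw [← Complex.exp_nat_mul]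
      congr 1
      field_simp
    rw [inv_sin_sq_eq_sum_range hn] <;> rw [hexp]
    · exact hζ.pow_ne_one_of_pos_of_lt (by omega) hjn
    · rw [← pow_mul, mul_comm, pow_mul, hζ.pow_eq_one, one_pow]
  have hinner : ∀ m ∈ range n,
      ∑ j ∈ Ico 1 n, ((m : ℂ) ^ 2 - n * m) * (ζ ^ j) ^ m = n * m - (m : ℂ) ^ 2 := by
    intro m hm
    rcases Nat.eq_zero_or_pos m with rfl | hm0
    · simp
    · rw [← mul_sum, hζ.sum_Ico_pow_pow_eq_neg_one hm0.ne' (mem_range.mp hm)]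
      ring
  apply Complex.ofReal_injective
  have h6 := sum_range_mul_sub_sq (n : ℂ) n
  push_cast
  rw [sum_congr rfl hterm, ← mul_sum, sum_comm, sum_congr rfl hinner, div_mul_eq_mul_div,
    div_eq_iff hn']
  linear_combination h6 / 3

theorem stmt8_general (k : ℕ) :
    (((k : ℝ) + 2) / 2) *
        ∑ j ∈ Finset.Icc 1 (k + 1), ((Real.sin ((j : ℝ) * Real.pi / ((k : ℝ) + 2))) ^ 2)⁻¹
      = (Nat.choose (k + 3) 3 : ℝ) := by
  have hsum := Real.sum_Ico_inv_sin_sq (n := k + 2) (by omega)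
  push_cast at hsum
  rw [show Icc 1 (k + 1) = Ico 1 (k + 2) from rfl, hsum, Nat.cast_choose ℝ (by omega),
    Nat.add_sub_cancel]
  simp only [Nat.factorial_succ, Nat.factorial_zero]
  field_simp
  push_cast
  ring

/-- For genus `g = 2` the Verlinde formula specializes to a binomial coefficient: for
every positive integer `k`,
`((k+2)/2) · Σ_{j=1}^{k+1} (sin²(jπ/(k+2)))⁻¹ = C(k+3,3) = (k+1)(k+2)(k+3)/6`. -/
theorem stmt8 (k : ℕ) (hk : 0 < k) :
    (((k : ℝ) + 2) / 2) *
        ∑ j ∈ Finset.Icc 1 (k + 1), ((Real.sin ((j : ℝ) * Real.pi / ((k : ℝ) + 2))) ^ 2)⁻¹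
      = (Nat.choose (k + 3) 3 : ℝ) :=
  stmt8_general k
end

section
/- Let ω = Σ_{1≤i<j≤n} Ω^{ij} d log(z_i − z_j) be an End(V)-valued 1-form on the configuration space of n points in ℂ, where the Ω^{ij} = Ω^{ji} ∈ End(V) satisfy the infinitesimal braid relations [Ω^{st}, Ω^{uv}] = 0 for {s,t} ∩ {u,v} = ∅ and [Ω^{su}, Ω^{st} + Ω^{tu}] = 0 for distinct s,t,u. Then dω = 0 and ω ∧ ω = 0, so the connection d + ω is flat. -/
/-!
Write `F_ij(v) = (v_i - v_j)/(z_i - z_j)`, so that twice `ω(v)` is `∑_{i,j} F_ij(v) Ω^{ij}` over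
all ordered pairs. Expanding `[ω(v), ω(w)]` over quadruples `(i, j, k, l)`, the terms with `{i,j}`
and `{k,l}` disjoint or equal vanish, and the others regroup into
`∑_{a,b,c} F_ab(v) F_ac(w) [Ω^{ab}, Ω^{ac}]`.
The infinitesimal braid relations say exactly that `[Ω^{ab}, Ω^{ac}]` is alternating in `(a, b, c)`,
so symmetrizing over the six permutations of each triple multiplies it by the alternating sum of
`F_ab(v) F_ac(w)`, which vanishes by Arnold's relation among the forms `d log(z_i - z_j)`.
-/

open Finset

section

variable {ι K L : Type*}

lemma sum_sum_sum_symmetrize_eq_six_nsmul [Fintype ι] {M : Type*} [AddCommMonoid M]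
    (f : ι → ι → ι → M) :
    ∑ a, ∑ b, ∑ c, (f a b c + f b c a + f c a b + f a c b + f b a c + f c b a) =
      6 • ∑ a, ∑ b, ∑ c, f a b c := by
  have swap₁₂ (g : ι → ι → ι → M) : ∑ a, ∑ b, ∑ c, g b a c = ∑ a, ∑ b, ∑ c, g a b c :=
    Finset.sum_comm
  have swap₂₃ (g : ι → ι → ι → M) : ∑ a, ∑ b, ∑ c, g a c b = ∑ a, ∑ b, ∑ c, g a b c :=
    sum_congr rfl fun _ _ => Finset.sum_comm
  have cycle : ∑ a, ∑ b, ∑ c, f b c a = ∑ a, ∑ b, ∑ c, f a b c := (swap₁₂ _).trans (swap₂₃ _)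
  have cycle₂ : ∑ a, ∑ b, ∑ c, f c a b = ∑ a, ∑ b, ∑ c, f a b c := (swap₂₃ _).trans (swap₁₂ _)
  have reverse : ∑ a, ∑ b, ∑ c, f c b a = ∑ a, ∑ b, ∑ c, f a b c := (swap₁₂ _).trans cycle₂
  simp only [sum_add_distrib, cycle, cycle₂, reverse, swap₁₂ f, swap₂₃ f, succ_nsmul, zero_smul,
    zero_add]

lemma sum_sum_eq_two_nsmul_sum_lt [Fintype ι] [LinearOrder ι] {M : Type*} [AddCommMonoid M]
    (H : ι → ι → M) (hdiag : ∀ i, H i i = 0) (hsymm : ∀ i j, H i j = H j i) :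
    ∑ i, ∑ j, H i j = 2 • ∑ p ∈ univ.filter (fun p : ι × ι => p.1 < p.2), H p.1 p.2 := by
  have hsplit (i j : ι) : H i j = (if i < j then H i j else 0) + (if j < i then H j i else 0) := by
    rcases lt_trichotomy i j with h | rfl | h
    · simp [h, h.not_gt]
    · simp [hdiag]
    · simp [h, h.not_gt, hsymm i j]
  have hlt : ∑ i, ∑ j, (if i < j then H i j else 0) =
      ∑ p ∈ univ.filter (fun p : ι × ι => p.1 < p.2), H p.1 p.2 := by
    rw [sum_filter, Fintype.sum_prod_type]
  calc ∑ i, ∑ j, H i j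
      = ∑ i, ∑ j, ((if i < j then H i j else 0) + (if j < i then H j i else 0)) :=
        sum_congr rfl fun i _ => sum_congr rfl fun j _ => hsplit i j
    _ = 2 • ∑ p ∈ univ.filter (fun p : ι × ι => p.1 < p.2), H p.1 p.2 := by
        simp only [sum_add_distrib]
        rw [Finset.sum_comm (f := fun i j => if j < i then H j i else 0), hlt, two_nsmul]

section dlogDiff

variable [Field K]

def dlogDiff (z : ι → K) (i j : ι) (v : ι → K) : K := (v i - v j) / (z i - z j)

@[simp]
lemma dlogDiff_self (z : ι → K) (i : ι) (v : ι → K) : dlogDiff z i i v = 0 := by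
  simp [dlogDiff]

lemma dlogDiff_comm (z : ι → K) (i j : ι) (v : ι → K) : dlogDiff z i j v = dlogDiff z j i v := by
  rw [dlogDiff, dlogDiff, ← neg_sub (v j), ← neg_sub (z j), neg_div_neg_eq]

lemma dlogDiff_arnold {z : ι → K} (hz : Function.Injective z) {a b c : ι}
    (hab : a ≠ b) (hbc : b ≠ c) (hca : c ≠ a) (v w : ι → K) :
    dlogDiff z a b v * dlogDiff z a c w + dlogDiff z b c v * dlogDiff z b a w
      + dlogDiff z c a v * dlogDiff z c b w =
    dlogDiff z a c v * dlogDiff z a b w + dlogDiff z b a v * dlogDiff z b c w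
      + dlogDiff z c b v * dlogDiff z c a w := by
  have hab' : z a - z b ≠ 0 := sub_ne_zero.mpr (hz.ne hab)
  have hbc' : z b - z c ≠ 0 := sub_ne_zero.mpr (hz.ne hbc)
  have hca' : z c - z a ≠ 0 := sub_ne_zero.mpr (hz.ne hca)
  have hac' : z a - z c ≠ 0 := sub_ne_zero.mpr (hz.ne hca.symm)
  have hba' : z b - z a ≠ 0 := sub_ne_zero.mpr (hz.ne hab.symm)
  have hcb' : z c - z b ≠ 0 := sub_ne_zero.mpr (hz.ne hbc.symm)
  simp only [dlogDiff]
  field_simp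
  ring

end dlogDiff

structure IsInfinitesimalBraid [LieRing L] (Ω : ι → ι → L) : Prop where
  symm : ∀ i j, Ω i j = Ω j i
  lie_eq_zero : ∀ s t u v, s ≠ t → s ≠ u → s ≠ v → t ≠ u → t ≠ v → u ≠ v → ⁅Ω s t, Ω u v⁆ = 0
  lie_add_eq_zero : ∀ s t u, s ≠ t → s ≠ u → t ≠ u → ⁅Ω s u, Ω s t + Ω t u⁆ = 0

lemma IsInfinitesimalBraid.lie_cyclic [LieRing L] {Ω : ι → ι → L} (hΩ : IsInfinitesimalBraid Ω)
    {a b c : ι} (hab : a ≠ b) (hbc : b ≠ c) (hca : c ≠ a) :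
    ⁅Ω a b, Ω a c⁆ = ⁅Ω b c, Ω b a⁆ := by
  have h := hΩ.lie_add_eq_zero a c b hca.symm hab hbc.symm
  rw [lie_add, hΩ.symm c b] at h
  rw [hΩ.symm b a, ← lie_skew (Ω b c) (Ω a b)]
  exact eq_neg_of_add_eq_zero_left h

section tripleTerm

variable [Field K] [LieRing L] [LieAlgebra K L] {Ω : ι → ι → L}

def tripleTerm (Ω : ι → ι → L) (z v w : ι → K) (a b c : ι) : L :=
  (dlogDiff z a b v * dlogDiff z a c w) • ⁅Ω a b, Ω a c⁆

lemma tripleTerm_orbit_sum_eq_zero (hΩ : IsInfinitesimalBraid Ω) {z : ι → K}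
    (hz : Function.Injective z) (v w : ι → K) (a b c : ι) :
    tripleTerm Ω z v w a b c + tripleTerm Ω z v w b c a + tripleTerm Ω z v w c a b
      + tripleTerm Ω z v w a c b + tripleTerm Ω z v w b a c + tripleTerm Ω z v w c b a = 0 := by
  by_cases h : a = b ∨ b = c ∨ c = a
  · rcases h with rfl | rfl | rfl <;> simp [tripleTerm, dlogDiff_comm z]
  push Not at h
  obtain ⟨hab, hbc, hca⟩ := h
  have hbca := hΩ.lie_cyclic hab hbc hca
  have hcab := hΩ.lie_cyclic hbc hca hab
  simp only [tripleTerm]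
  rw [← lie_skew (Ω a c), ← lie_skew (Ω b a), ← lie_skew (Ω c b), ← hcab, ← hbca]
  linear_combination (norm := module) dlogDiff_arnold hz hab hbc hca v w • ⁅Ω a b, Ω a c⁆

-- The four summands are the four ways in which `{i, j}` and `{k, l}` can share an index.
lemma smul_lie_eq_sum_tripleTerm [DecidableEq ι] (hΩ : IsInfinitesimalBraid Ω) (z v w : ι → K)
    (i j k l : ι) :
    (dlogDiff z i j v * dlogDiff z k l w) • ⁅Ω i j, Ω k l⁆ =
      (if i = k then tripleTerm Ω z v w i j l else 0) +
      (if i = l then tripleTerm Ω z v w i j k else 0) +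
      (if j = k then tripleTerm Ω z v w j i l else 0) +
      (if j = l then tripleTerm Ω z v w j i k else 0) := by
  rcases eq_or_ne i j with rfl | hij
  · simp [tripleTerm]
  rcases eq_or_ne k l with rfl | hkl
  · split_ifs <;> subst_vars <;> simp [tripleTerm]
  by_cases hmeet : i = k ∨ i = l ∨ j = k ∨ j = l
  · rcases hmeet with rfl | rfl | rfl | rfl <;> split_ifs <;> subst_vars <;>
      first | contradiction | simp [tripleTerm, dlogDiff_comm z, hΩ.symm]
  push Not at hmeet
  obtain ⟨hik, hil, hjk, hjl⟩ := hmeet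
  simp [hik, hil, hjk, hjl, hΩ.lie_eq_zero i j k l hij hik hil hjk hjl hkl]

variable [Fintype ι]

lemma lie_sum_sum_eq_four_nsmul (hΩ : IsInfinitesimalBraid Ω) (z v w : ι → K) :
    ⁅∑ i, ∑ j, dlogDiff z i j v • Ω i j, ∑ k, ∑ l, dlogDiff z k l w • Ω k l⁆ =
      4 • ∑ a, ∑ b, ∑ c, tripleTerm Ω z v w a b c := by
  classical
  have swap₁₂ : ∑ a, ∑ b, ∑ c, tripleTerm Ω z v w b a c =
      ∑ a, ∑ b, ∑ c, tripleTerm Ω z v w a b c := Finset.sum_comm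
  simp only [sum_lie, smul_lie]
  simp only [lie_sum, lie_smul, smul_sum, smul_smul, smul_lie_eq_sum_tripleTerm hΩ,
    sum_add_distrib, sum_ite_irrel, sum_const_zero, sum_ite_eq, mem_univ, if_true]
  rw [swap₁₂]
  simp only [← smul_sum]
  abel

lemma sum_tripleTerm_eq_zero [CharZero K] (hΩ : IsInfinitesimalBraid Ω) {z : ι → K}
    (hz : Function.Injective z) (v w : ι → K) : ∑ a, ∑ b, ∑ c, tripleTerm Ω z v w a b c = 0 := by
  have h6 : (6 : K) • ∑ a, ∑ b, ∑ c, tripleTerm Ω z v w a b c = 0 := by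
    rw [ofNat_smul_eq_nsmul K 6, ← sum_sum_sum_symmetrize_eq_six_nsmul]
    simp [tripleTerm_orbit_sum_eq_zero hΩ hz]
  exact (smul_eq_zero.mp h6).resolve_left (by norm_num)

end tripleTerm

section kzForm

variable [Fintype ι] [LinearOrder ι] [Field K] [LieRing L] [LieAlgebra K L] {Ω : ι → ι → L}

def kzForm (Ω : ι → ι → L) (z v : ι → K) : L :=
  ∑ p ∈ univ.filter (fun p : ι × ι => p.1 < p.2), dlogDiff z p.1 p.2 v • Ω p.1 p.2

lemma sum_sum_smul_eq_two_nsmul_kzForm (hΩ : IsInfinitesimalBraid Ω) (z v : ι → K) :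
    ∑ i, ∑ j, dlogDiff z i j v • Ω i j = 2 • kzForm Ω z v :=
  sum_sum_eq_two_nsmul_sum_lt _ (by simp) fun i j => by rw [dlogDiff_comm, hΩ.symm]

theorem lie_kzForm_eq_zero [CharZero K] (hΩ : IsInfinitesimalBraid Ω) {z : ι → K}
    (hz : Function.Injective z) (v w : ι → K) : ⁅kzForm Ω z v, kzForm Ω z w⁆ = 0 := by
  have h := lie_sum_sum_eq_four_nsmul hΩ z v w
  rw [sum_sum_smul_eq_two_nsmul_kzForm hΩ, sum_sum_smul_eq_two_nsmul_kzForm hΩ,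
    sum_tripleTerm_eq_zero hΩ hz, smul_zero, nsmul_lie, lie_nsmul, smul_smul,
    ← Nat.cast_smul_eq_nsmul K] at h
  exact (smul_eq_zero.mp h).resolve_left (by norm_num)

end kzForm

end

theorem stmt16_general {n : ℕ} {V : Type*} [AddCommGroup V] [Module ℂ V]
    (Ω : Fin n → Fin n → Module.End ℂ V)
    (hsymm : ∀ i j, Ω i j = Ω j i)
    (h1 : ∀ s t u v : Fin n, s ≠ t → s ≠ u → s ≠ v → t ≠ u → t ≠ v → u ≠ v →
      Commute (Ω s t) (Ω u v))
    (h2 : ∀ s t u : Fin n, s ≠ t → s ≠ u → t ≠ u →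
      Commute (Ω s u) (Ω s t + Ω t u)) :
    let ω : (Fin n → ℂ) → (Fin n → ℂ) → Module.End ℂ V := fun z v =>
      ∑ p ∈ Finset.univ.filter (fun p : Fin n × Fin n => p.1 < p.2),
        ((v p.1 - v p.2) / (z p.1 - z p.2)) • Ω p.1 p.2
    (∀ z : Fin n → ℂ, Function.Injective z → ∀ v w : Fin n → ℂ,
      (∑ p ∈ Finset.univ.filter (fun p : Fin n × Fin n => p.1 < p.2),
        ((-((v p.1 - v p.2) * (w p.1 - w p.2)) + (w p.1 - w p.2) * (v p.1 - v p.2)) /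
            (z p.1 - z p.2) ^ 2) • Ω p.1 p.2) = 0) ∧
    (∀ z : Fin n → ℂ, Function.Injective z → ∀ v w : Fin n → ℂ,
      ω z v * ω z w - ω z w * ω z v = 0) := by
  let _ : LieRing (Module.End ℂ V) := LieRing.ofAssociativeRing
  have hΩ : IsInfinitesimalBraid Ω :=
    ⟨hsymm, fun s t u v hst hsu hsv htu htv huv =>
      commute_iff_lie_eq.mp (h1 s t u v hst hsu hsv htu htv huv),
      fun s t u hst hsu htu => commute_iff_lie_eq.mp (h2 s t u hst hsu htu)⟩
  refine ⟨fun z _ v w => sum_eq_zero fun p _ => ?_, fun z hz v w => lie_kzForm_eq_zero hΩ hz v w⟩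
  rw [mul_comm (w p.1 - w p.2), neg_add_cancel, zero_div, zero_smul]

/-- Kohno/Arnold flatness criterion for the KZ-type form
`ω = Σ_{i<j} Ω^{ij} d log(z_i - z_j)` on the configuration space of `n` points in `ℂ`:
if the `Ω^{ij} = Ω^{ji} ∈ End(V)` satisfy the infinitesimal braid relations, then
`dω = 0` and `ω ∧ ω = 0`, so the connection `d + ω` is flat.  Here `ω` is identified
with its value `ω_z(v) = Σ_{i<j} ((v_i - v_j)/(z_i - z_j)) Ω^{ij}` on tangent vectors
`v`, the 2-form `dω` with
`(dω)_z(v,w) = Σ_{i<j} ((-(v_i-v_j)(w_i-w_j) + (w_i-w_j)(v_i-v_j))/(z_i-z_j)²) Ω^{ij}`,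
and `(ω∧ω)_z(v,w) = ω_z(v)ω_z(w) - ω_z(w)ω_z(v)`. -/
theorem stmt16 {n : ℕ} {V : Type*} [AddCommGroup V] [Module ℂ V]
    [FiniteDimensional ℂ V]
    (Ω : Fin n → Fin n → Module.End ℂ V)
    (hsymm : ∀ i j, Ω i j = Ω j i)
    (h1 : ∀ s t u v : Fin n, s ≠ t → s ≠ u → s ≠ v → t ≠ u → t ≠ v → u ≠ v →
      Commute (Ω s t) (Ω u v))
    (h2 : ∀ s t u : Fin n, s ≠ t → s ≠ u → t ≠ u →
      Commute (Ω s u) (Ω s t + Ω t u)) :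
    let ω : (Fin n → ℂ) → (Fin n → ℂ) → Module.End ℂ V := fun z v =>
      ∑ p ∈ Finset.univ.filter (fun p : Fin n × Fin n => p.1 < p.2),
        ((v p.1 - v p.2) / (z p.1 - z p.2)) • Ω p.1 p.2
    (∀ z : Fin n → ℂ, Function.Injective z → ∀ v w : Fin n → ℂ,
      (∑ p ∈ Finset.univ.filter (fun p : Fin n × Fin n => p.1 < p.2),
        ((-((v p.1 - v p.2) * (w p.1 - w p.2)) + (w p.1 - w p.2) * (v p.1 - v p.2)) /
            (z p.1 - z p.2) ^ 2) • Ω p.1 p.2) = 0) ∧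
    (∀ z : Fin n → ℂ, Function.Injective z → ∀ v w : Fin n → ℂ,
      ω z v * ω z w - ω z w * ω z v = 0) :=
  stmt16_general Ω hsymm h1 h2
end
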